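/- arXiv:0706.1808 — 3 statements merged into one kernel-verified Lean document; each statement's English description precedes it below -/
import Mathlib

section
/- If ±v₁, ±v₂, ±v₃ are the six vertices of an affinely regular hexagon inscribed in a centrally symmetric convex domain C ⊂ ℝ², then C + Λ is a lattice packing, where Λ = {2z₁v₁ + 2z₂v₂ : z₁, z₂ ∈ ℤ}. -/
/-!
Let `p` be the gauge of `C`, a norm on `ℝ²` taking the value `1` at the six hexagon vertices
`±v₁, ±v₂, ±(v₂ - v₁)`. Every nonzero point of the lattice `ℤv₁ + ℤv₂` lies in a cone
`m • a + n • b` (`m ≥ 1`, `n ≥ 0`) spanned by consecutive vertices `a, b`, and since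
`a - b` is again a vertex, the triangle inequality gives
`m + n = p ((m + n) • a) ≤ p (m • a + n • b) + n`. Thus all nonzero lattice points lie outside
the interior of `C`. If two translates `C + 2λ` and `C + 2μ` had overlapping interiors, the
symmetry and convexity of `C` would put `λ - μ` in the interior of `C`.
-/

open Pointwise Set

noncomputable section

def IsPacking (C X : Set (ℝ × ℝ)) : Prop :=
  X.Pairwise fun x y => Disjoint (interior (C + {x})) (interior (C + {y}))

namespace Seminorm

variable {E : Type*} [AddCommGroup E] [Module ℝ E] (p : Seminorm ℝ E)

theorem le_apply_smul_add_smul {a b : E} (ha : p a = 1) (hab : p (a - b) = 1) {m n : ℝ}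
    (hm : 0 ≤ m) (hn : 0 ≤ n) : m ≤ p (m • a + n • b) := by
  have h : m + n ≤ p (m • a + n • b) + n :=
    calc m + n = p ((m + n) • a) := by
          rw [map_smul_eq_mul, ha, mul_one, Real.norm_of_nonneg (by linarith)]
      _ = p ((m • a + n • b) + n • (a - b)) := by congr 1; module
      _ ≤ p (m • a + n • b) + p (n • (a - b)) := map_add_le_add p _ _
      _ = p (m • a + n • b) + n := by rw [map_smul_eq_mul, hab, mul_one, Real.norm_of_nonneg hn]
  linarith

theorem one_le_apply_intCast_smul_add_intCast_smul {a b : E} (ha : p a = 1) (hb : p b = 1)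
    (hab : p (a - b) = 1) {m n : ℤ} (hm : 0 ≤ m) (hn : 0 ≤ n) (hmn : m ≠ 0 ∨ n ≠ 0) :
    1 ≤ p ((m : ℝ) • a + (n : ℝ) • b) := by
  rcases (by omega : 1 ≤ m ∨ 1 ≤ n) with hm' | hn'
  · have : (1 : ℝ) ≤ m := by exact_mod_cast hm'
    linarith [p.le_apply_smul_add_smul ha hab (m := m) (n := n) (by positivity) (by positivity)]
  · have hba : p (b - a) = 1 := by rw [← map_neg_eq_map, neg_sub, hab]
    have : (1 : ℝ) ≤ n := by exact_mod_cast hn'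
    rw [add_comm]
    linarith [p.le_apply_smul_add_smul hb hba (m := n) (n := m) (by positivity) (by positivity)]

theorem one_le_apply_of_hexagon {v₁ v₂ : E} (h₁ : p v₁ = 1) (h₂ : p v₂ = 1)
    (h₃ : p (v₂ - v₁) = 1) {z₁ z₂ : ℤ} (hz : z₁ ≠ 0 ∨ z₂ ≠ 0) :
    1 ≤ p ((z₁ : ℝ) • v₁ + (z₂ : ℝ) • v₂) := by
  wlog hz₁ : 0 ≤ z₁ generalizing z₁ z₂
  · have := this (z₁ := -z₁) (z₂ := -z₂) (by omega) (by omega)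
    rwa [Int.cast_neg, Int.cast_neg, neg_smul, neg_smul, ← neg_add, map_neg_eq_map] at this
  have h₃' : p (v₁ - v₂) = 1 := by rw [← map_neg_eq_map, neg_sub, h₃]
  have hn₂ : p (-v₂) = 1 := by rw [map_neg_eq_map, h₂]
  rcases le_total 0 z₂ with hz₂ | hz₂
  · exact p.one_le_apply_intCast_smul_add_intCast_smul h₁ h₂ h₃' hz₁ hz₂ hz
  rcases le_total 0 (z₁ + z₂) with hs | hs
  · have := p.one_le_apply_intCast_smul_add_intCast_smul h₃' h₁
      (by rwa [show v₁ - v₂ - v₁ = -v₂ by abel, map_neg_eq_map])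
      (m := -z₂) (n := z₁ + z₂) (by omega) hs (by omega)
    convert this using 2
    push_cast
    module
  · have := p.one_le_apply_intCast_smul_add_intCast_smul hn₂ h₃'
      (by rwa [show -v₂ - (v₁ - v₂) = -v₁ by abel, map_neg_eq_map])
      (m := -(z₁ + z₂)) (n := z₁) (by omega) hz₁ (by omega)
    convert this using 2
    push_cast
    module

end Seminorm

theorem interior_add_singleton {E : Type*} [AddCommGroup E] [TopologicalSpace E]
    [IsTopologicalAddGroup E] (s : Set E) (x : E) : interior (s + {x}) = x +ᵥ interior s := by
  rw [add_comm, singleton_add, ← interior_vadd]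
  rfl

section Symmetric

variable {E : Type*} [AddCommGroup E] [Module ℝ E] [TopologicalSpace E] [IsTopologicalAddGroup E]
  [ContinuousSMul ℝ E] {s : Set E}

theorem half_smul_sub_mem_interior (hs : Convex ℝ s) (hneg : ∀ x ∈ s, -x ∈ s) {x y : E}
    (hx : x ∈ interior s) (hy : y ∈ interior s) : (1 / 2 : ℝ) • (x - y) ∈ interior s := by
  have hy' : -y ∈ interior s := by
    refine interior_mono ?_ ((Homeomorph.neg E).image_interior s ▸ mem_image_of_mem _ hy)
    rintro _ ⟨z, hz, rfl⟩
    exact hneg z hz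
  have := hs.interior hx hy' (by norm_num : (0 : ℝ) ≤ 1 / 2) (by norm_num : (0 : ℝ) ≤ 1 / 2)
    (by norm_num)
  rwa [smul_sub, sub_eq_add_neg, ← smul_neg]

theorem zero_mem_interior_of_forall_neg_mem (hs : Convex ℝ s) (hneg : ∀ x ∈ s, -x ∈ s)
    (hint : (interior s).Nonempty) : (0 : E) ∈ interior s := by
  obtain ⟨x, hx⟩ := hint
  simpa using half_smul_sub_mem_interior hs hneg hx hx

theorem half_smul_sub_mem_interior_of_not_disjoint (hs : Convex ℝ s) (hneg : ∀ x ∈ s, -x ∈ s)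
    {x y : E} (h : ¬Disjoint (interior (s + {x})) (interior (s + {y}))) :
    (1 / 2 : ℝ) • (x - y) ∈ interior s := by
  obtain ⟨a, hax, hay⟩ := not_disjoint_iff.1 h
  rw [interior_add_singleton, mem_vadd_set_iff_neg_vadd_mem, vadd_eq_add] at hax hay
  convert half_smul_sub_mem_interior hs hneg hay hax using 2
  abel

end Symmetric

theorem isPacking_of_one_le_gauge {C X : Set (ℝ × ℝ)} (hC : Convex ℝ C)
    (hneg : ∀ x ∈ C, -x ∈ C) (h0 : C ∈ nhds 0)
    (hX : X.Pairwise fun x y => 1 ≤ gauge C ((1 / 2 : ℝ) • (x - y))) : IsPacking C X := by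
  intro x hx y hy hxy
  by_contra h
  have := (gauge_lt_one_iff_mem_interior hC h0).2
    (half_smul_sub_mem_interior_of_not_disjoint hC hneg h)
  linarith [hX hx hy hxy]

theorem mahler_packing_general (C : Set (ℝ × ℝ)) (hconv : Convex ℝ C)
    (hint : (interior C).Nonempty) (hsymm : C = -C)
    (v₁ v₂ : ℝ × ℝ)
    (h1 : v₁ ∈ frontier C) (h2 : v₂ ∈ frontier C) (h3 : v₂ - v₁ ∈ frontier C) :
    IsPacking C {p : ℝ × ℝ | ∃ z₁ z₂ : ℤ, p = (2 * (z₁ : ℝ)) • v₁ + (2 * (z₂ : ℝ)) • v₂} := by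
  have hneg : ∀ x ∈ C, -x ∈ C := fun x hx => by rw [hsymm]; simpa using hx
  have h0 : C ∈ nhds 0 :=
    mem_interior_iff_mem_nhds.1 (zero_mem_interior_of_forall_neg_mem hconv hneg hint)
  let p := gaugeSeminorm ((balanced_iff_neg_mem hconv).2 hneg) hconv (absorbent_nhds_zero h0)
  have hp : ∀ x ∈ frontier C, p x = 1 := fun x hx =>
    (gauge_eq_one_iff_mem_frontier hconv h0).2 hx
  refine isPacking_of_one_le_gauge hconv hneg h0 ?_
  rintro _ ⟨z₁, z₂, rfl⟩ _ ⟨w₁, w₂, rfl⟩ hne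
  have hz : z₁ - w₁ ≠ 0 ∨ z₂ - w₂ ≠ 0 := by
    by_contra! h
    obtain ⟨rfl, rfl⟩ : z₁ = w₁ ∧ z₂ = w₂ := by omega
    exact hne rfl
  have hhalf : (1 / 2 : ℝ) • ((2 * (z₁ : ℝ)) • v₁ + (2 * (z₂ : ℝ)) • v₂
      - ((2 * (w₁ : ℝ)) • v₁ + (2 * (w₂ : ℝ)) • v₂))
      = ((z₁ - w₁ : ℤ) : ℝ) • v₁ + ((z₂ - w₂ : ℤ) : ℝ) • v₂ := by
    push_cast
    module
  rw [hhalf]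
  exact p.one_le_apply_of_hexagon (hp v₁ h1) (hp v₂ h2) (hp _ h3) hz

/-- Mahler's lemma: if ±v₁, ±v₂, ±v₃ are the six vertices of an affinely regular hexagon
inscribed in the centrally symmetric convex domain `C` (so `v₃ = v₂ - v₁` and all six
points lie on the boundary of `C`), then `C + Λ` is a lattice packing, where
`Λ = {2z₁v₁ + 2z₂v₂ : z₁, z₂ ∈ ℤ}`. -/
theorem mahler_packing (C : Set (ℝ × ℝ)) (hcpt : IsCompact C) (hconv : Convex ℝ C)
    (hint : (interior C).Nonempty) (hsymm : C = -C)
    (v₁ v₂ : ℝ × ℝ) (hli : LinearIndependent ℝ ![v₁, v₂])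
    (h1 : v₁ ∈ frontier C) (h2 : v₂ ∈ frontier C) (h3 : v₂ - v₁ ∈ frontier C) :
    IsPacking C {p : ℝ × ℝ | ∃ z₁ z₂ : ℤ, p = (2 * (z₁ : ℝ)) • v₁ + (2 * (z₂ : ℝ)) • v₂} :=
  mahler_packing_general C hconv hint hsymm v₁ v₂ h1 h2 h3

end
end

section
/- Let C be a two-dimensional centrally symmetric convex domain, and let v₁v₂...v₆ be an affinely regular hexagon inscribed in C with vertices v₁, v₂, v₃, v₄=-v₁, v₅=-v₂, v₆=-v₃ on ∂C. For i = 1,2,3, let mᵢ = (vᵢ + vᵢ₊₁)/2 and let fᵢ be the ratio ‖mᵢ*‖/‖mᵢ‖, where mᵢ* is the boundary point of C on the ray from the origin through mᵢ. Then γ*(C) ≤ max{f₁, f₂, f₃}. -/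
open Pointwise Set

noncomputable section

def IsCovering (D X : Set (ℝ × ℝ)) : Prop :=
  ⋃ x ∈ X, (D + {x}) = Set.univ

def IsLattice2 (Λ : Set (ℝ × ℝ)) : Prop :=
  ∃ v w : ℝ × ℝ, LinearIndependent ℝ ![v, w] ∧
    Λ = {p | ∃ z₁ z₂ : ℤ, p = (z₁ : ℝ) • v + (z₂ : ℝ) • w}

/-- γ*(C): the smallest `r > 0` for which some lattice `Λ` makes `C + Λ` a packing
and `rC + Λ` a covering of the plane. -/
def gammaStar (C : Set (ℝ × ℝ)) : ℝ :=
  sInf {r : ℝ | 0 < r ∧ ∃ Λ : Set (ℝ × ℝ),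
    IsLattice2 Λ ∧ IsPacking C Λ ∧ IsCovering (r • C) Λ}

/-!
Take the lattice generated by `r (v₁ + v₂)` and `r (2v₂ - v₁)` with `r = max tᵢ`, and measure
everything with the gauge of `C`, a norm in which `v₁`, `v₂`, `v₂ - v₁` have length `1`.
The hexagon `conv {±v₁, ±v₂, ±(v₂ - v₁)}` lies in `C` and tiles the plane under the lattice
generated by `v₁ + v₂ = 2m₁` and `2v₂ - v₁ = 2m₂`, so `rC` covers. For the packing, every nonzero
lattice vector needs gauge at least `2`. The six shortest ones, `±2r mᵢ`, have gauge
`2r / tᵢ ≥ 2`. For any other `a v₁ + b v₂`, the triangle inequality through the hexagon's vertices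
bounds its gauge below by the spread `max - min` of `|a|, |b|, |a + b|`, which is at least `2` at
the remaining lattice points.
-/

open Topology

theorem Convex.mem_nhds_zero_of_neg_eq {E : Type*} [AddCommGroup E] [Module ℝ E]
    [TopologicalSpace E] [IsTopologicalAddGroup E] [ContinuousSMul ℝ E] {C : Set E}
    (hconv : Convex ℝ C) (hsymm : -C = C) (hint : (interior C).Nonempty) : C ∈ 𝓝 0 := by
  obtain ⟨x, hx⟩ := hint
  have hx' : -x ∈ interior C := by
    rw [← hsymm]
    exact ((Homeomorph.neg E).preimage_interior C).subset (by simpa using hx)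
  have h0 := hconv.interior hx hx' (by norm_num) (by norm_num) (add_halves (1 : ℝ))
  rw [smul_neg, add_neg_cancel] at h0
  exact mem_interior_iff_mem_nhds.1 h0

theorem Convex.balanced_of_neg_eq {E : Type*} [AddCommGroup E] [Module ℝ E] {C : Set E}
    (hconv : Convex ℝ C) (hsymm : -C = C) : Balanced ℝ C :=
  (balanced_iff_neg_mem hconv).2 fun _ hx => hsymm ▸ neg_mem_neg.2 hx

theorem sub_mem_interior_of_mem_interior_add_singleton {G : Type*} [AddCommGroup G]
    [TopologicalSpace G] [IsTopologicalAddGroup G] {C : Set G} {x z : G}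
    (hz : z ∈ interior (C + {x})) : z - x ∈ interior C := by
  have htrans : C + {x} = Homeomorph.addRight x '' C := by rw [add_singleton]; rfl
  rw [htrans, ← Homeomorph.image_interior] at hz
  obtain ⟨c, hc, rfl⟩ := hz
  simpa using hc

def intSpanPair (v w : ℝ × ℝ) : Set (ℝ × ℝ) :=
  {p | ∃ z₁ z₂ : ℤ, p = (z₁ : ℝ) • v + (z₂ : ℝ) • w}

section PackingCovering

variable {C : Set (ℝ × ℝ)}

theorem isPacking_of_pairwise_two_le_gauge_sub (hconv : Convex ℝ C) (hC : C ∈ 𝓝 0)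
    (hsymm : -C = C) {X : Set (ℝ × ℝ)} (hX : X.Pairwise fun x y => 2 ≤ gauge C (x - y)) :
    IsPacking C X := by
  intro x hx y hy hxy
  refine Set.disjoint_left.2 fun z hzx hzy => ?_
  have hlt : ∀ w, z ∈ interior (C + {w}) → gauge C (z - w) < 1 := fun w hw =>
    (gauge_lt_one_iff_mem_interior hconv hC).2 (sub_mem_interior_of_mem_interior_add_singleton hw)
  have htri : gauge C (x - y) ≤ gauge C (z - y) + gauge C (z - x) := by
    calc gauge C (x - y) = gauge C ((z - y) + -(z - x)) := by congr 1; abel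
      _ ≤ gauge C (z - y) + gauge C (-(z - x)) :=
        gauge_add_le hconv (absorbent_nhds_zero hC) _ _
      _ = gauge C (z - y) + gauge C (z - x) := by
        rw [gauge_neg fun w hw => hsymm ▸ neg_mem_neg.2 hw]
  linarith [hX hx hy hxy, hlt x hzx, hlt y hzy]

theorem isPacking_intSpanPair (hconv : Convex ℝ C) (hC : C ∈ 𝓝 0) (hsymm : -C = C)
    {v w : ℝ × ℝ}
    (h : ∀ k₁ k₂ : ℤ, (k₁ ≠ 0 ∨ k₂ ≠ 0) → 2 ≤ gauge C ((k₁ : ℝ) • v + (k₂ : ℝ) • w)) :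
    IsPacking C (intSpanPair v w) := by
  refine isPacking_of_pairwise_two_le_gauge_sub hconv hC hsymm ?_
  rintro _ ⟨z₁, z₂, rfl⟩ _ ⟨w₁, w₂, rfl⟩ hne
  have hk : z₁ - w₁ ≠ 0 ∨ z₂ - w₂ ≠ 0 := by
    by_contra! hk
    obtain rfl : z₁ = w₁ := by omega
    obtain rfl : z₂ = w₂ := by omega
    exact hne rfl
  convert h _ _ hk using 2
  push_cast
  module

theorem isCovering_smul_of_forall_exists_gauge_sub_le (hconv : Convex ℝ C) (hC : C ∈ 𝓝 0)
    (hclosed : IsClosed C) {r : ℝ} (hr : 0 < r) {X : Set (ℝ × ℝ)}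
    (hX : ∀ x, ∃ y ∈ X, gauge C (x - y) ≤ r) : IsCovering (r • C) X := by
  refine eq_univ_of_forall fun x => ?_
  obtain ⟨y, hy, hxy⟩ := hX x
  have hmem : x - y ∈ r • C := by
    rw [mem_smul_set_iff_inv_smul_mem₀ hr.ne', ← hclosed.closure_eq,
      ← gauge_le_one_iff_mem_closure hconv hC, gauge_smul_of_nonneg (inv_nonneg.2 hr.le),
      smul_eq_mul, inv_mul_le_one₀ hr]
    exact hxy
  exact mem_biUnion hy (mem_add.2 ⟨x - y, hmem, y, rfl, sub_add_cancel x y⟩)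

theorem gammaStar_le_of_isLattice2 {r : ℝ} (hr : 0 < r) {Λ : Set (ℝ × ℝ)} (hΛ : IsLattice2 Λ)
    (hpack : IsPacking C Λ) (hcov : IsCovering (r • C) Λ) : gammaStar C ≤ r :=
  csInf_le ⟨0, fun _ hs => hs.1.le⟩ ⟨hr, Λ, hΛ, hpack, hcov⟩

end PackingCovering

/-- `k₁ - k₂` and `k₁ + 2k₂` are the coordinates of `k₁ (v₁ + v₂) + k₂ (2v₂ - v₁)` in the basis
`v₁, v₂`; the four small cases are `0` and the six shortest vectors of that lattice. -/
theorem Int.hexLattice_cases (k₁ k₂ : ℤ) :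
    (k₁ = 0 ∧ k₂ = 0) ∨ (|k₁| = 1 ∧ k₂ = 0) ∨ (k₁ = 0 ∧ |k₂| = 1) ∨ (k₁ = -k₂ ∧ |k₂| = 1) ∨
      2 ≤ max |k₁ - k₂| (max |k₁ + 2 * k₂| |k₁ - k₂ + (k₁ + 2 * k₂)|) -
        min |k₁ - k₂| (min |k₁ + 2 * k₂| |k₁ - k₂ + (k₁ + 2 * k₂)|) := by
  simp only [abs_eq_max_neg]
  omega

/-- The points `(z₁ - z₂, z₁ + 2z₂)` are the pairs of integers congruent mod `3`. Writing
`α - ⌊β⌋ ∈ 3m + [-1, 2)`, one of `(⌊β⌋ + 3m, ⌊β⌋)` and `(⌊β⌋ + 3m + 1, ⌊β⌋ + 1)` lies in the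
hexagon around `(α, β)`. -/
theorem exists_int_hexagon_le_one (α β : ℝ) : ∃ z₁ z₂ : ℤ,
    max |α - z₁ + z₂| (max |β - z₁ - 2 * z₂| |α - z₁ + z₂ + (β - z₁ - 2 * z₂)|) ≤ 1 := by
  have hb₀ : (⌊β⌋ : ℝ) ≤ β := Int.floor_le β
  have hb₁ : β < ⌊β⌋ + 1 := Int.lt_floor_add_one β
  set m := ⌊(α - ⌊β⌋ + 1) / 3⌋
  have hm₀ : (m : ℝ) ≤ (α - ⌊β⌋ + 1) / 3 := Int.floor_le _
  have hm₁ : (α - ⌊β⌋ + 1) / 3 < m + 1 := Int.lt_floor_add_one _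
  by_cases h : α - ⌊β⌋ - 3 * m + (β - ⌊β⌋) ≤ 1
  · refine ⟨⌊β⌋ + 2 * m, -m, ?_⟩
    simp only [max_le_iff, abs_le]
    push_cast
    refine ⟨⟨?_, ?_⟩, ⟨?_, ?_⟩, ?_, ?_⟩ <;> linarith
  · refine ⟨⌊β⌋ + 1 + 2 * m, -m, ?_⟩
    simp only [max_le_iff, abs_le]
    push_cast
    refine ⟨⟨?_, ?_⟩, ⟨?_, ?_⟩, ?_, ?_⟩ <;> linarith

namespace Seminorm

variable {E : Type*} [AddCommGroup E] [Module ℝ E] (p : Seminorm ℝ E) {v₁ v₂ : E} {r : ℝ}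

theorem map_smul_add_smul_le (a b : ℝ) (u w : E) :
    p (a • u + b • w) ≤ |a| * p u + |b| * p w := by
  simpa only [map_smul_eq_mul, Real.norm_eq_abs] using map_add_le_add p (a • u) (b • w)

theorem le_max_abs_of_hexagon (h₁ : p v₁ ≤ 1) (h₂ : p v₂ ≤ 1) (h₃ : p (v₂ - v₁) ≤ 1) (α β : ℝ) :
    p (α • v₁ + β • v₂) ≤ max |α| (max |β| |α + β|) := by
  have hsum : ∀ (a b : ℝ) (u w : E), p u ≤ 1 → p w ≤ 1 → p (a • u + b • w) ≤ |a| + |b| :=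
    fun a b u w hu hw => (p.map_smul_add_smul_le a b u w).trans (by
      gcongr <;> nlinarith [abs_nonneg a, abs_nonneg b, apply_nonneg p u, apply_nonneg p w])
  have e₁ := hsum α β v₁ v₂ h₁ h₂
  have e₂ := hsum (α + β) β v₁ (v₂ - v₁) h₁ h₃
  have e₃ := hsum (α + β) (-α) v₂ (v₂ - v₁) h₂ h₃
  rw [show (α + β) • v₁ + β • (v₂ - v₁) = α • v₁ + β • v₂ by module] at e₂
  rw [show (α + β) • v₂ + (-α) • (v₂ - v₁) = α • v₁ + β • v₂ by module, abs_neg] at e₃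
  -- the largest of `|α|, |β|, |α + β|` is the sum of the other two
  grind

theorem max_sub_min_abs_le_of_hexagon (h₁ : p v₁ = 1) (h₂ : p v₂ = 1) (h₃ : p (v₂ - v₁) = 1)
    (α β : ℝ) :
    max |α| (max |β| |α + β|) - min |α| (min |β| |α + β|) ≤ p (α • v₁ + β • v₂) := by
  have hdiff : ∀ (a b : ℝ) (u w : E), p u = 1 → p w = 1 → |a| ≤ p (a • u + b • w) + |b| := by
    intro a b u w hu hw
    have := map_sub_le_add p (a • u + b • w) (b • w)
    simpa [map_smul_eq_mul, hu, hw] using this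
  have e₁ : α • v₁ + β • v₂ = β • v₂ + α • v₁ := add_comm _ _
  have e₂ : α • v₁ + β • v₂ = (α + β) • v₁ + β • (v₂ - v₁) := by module
  have e₃ : α • v₁ + β • v₂ = β • (v₂ - v₁) + (α + β) • v₁ := by module
  have e₄ : α • v₁ + β • v₂ = (α + β) • v₂ + (-α) • (v₂ - v₁) := by module
  have e₅ : α • v₁ + β • v₂ = (-α) • (v₂ - v₁) + (α + β) • v₂ := by module
  have d₁ := hdiff α β v₁ v₂ h₁ h₂
  have d₂ := e₁ ▸ hdiff β α v₂ v₁ h₂ h₁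
  have d₃ := e₂ ▸ hdiff (α + β) β v₁ (v₂ - v₁) h₁ h₃
  have d₄ := e₃ ▸ hdiff β (α + β) (v₂ - v₁) v₁ h₃ h₁
  have d₅ := e₄ ▸ hdiff (α + β) (-α) v₂ (v₂ - v₁) h₂ h₃
  have d₆ := e₅ ▸ hdiff (-α) (α + β) (v₂ - v₁) v₂ h₃ h₂
  rw [abs_neg] at d₅ d₆
  grind

theorem two_le_map_smul_of_eq_one {m : E} {t : ℝ} (hm : p (t • (2⁻¹ : ℝ) • m) = 1)
    (ht : 0 < t) (htr : t ≤ r) : 2 ≤ p (r • m) := by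
  rw [map_smul_eq_mul, map_smul_eq_mul, Real.norm_of_nonneg ht.le] at hm
  rw [map_smul_eq_mul, Real.norm_of_nonneg (ht.le.trans htr)]
  norm_num at hm
  nlinarith [apply_nonneg p m]

theorem two_le_hexLattice (h₁ : p v₁ = 1) (h₂ : p v₂ = 1) (h₃ : p (v₂ - v₁) = 1) (hr : 1 ≤ r)
    (hV : 2 ≤ p (r • (v₁ + v₂))) (hW : 2 ≤ p (r • (v₂ + (v₂ - v₁))))
    (hU : 2 ≤ p (r • (v₂ - v₁ + -v₁))) {k₁ k₂ : ℤ} (hk : k₁ ≠ 0 ∨ k₂ ≠ 0) :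
    2 ≤ p ((k₁ : ℝ) • r • (v₁ + v₂) + (k₂ : ℝ) • r • (v₂ + (v₂ - v₁))) := by
  have hunit : ∀ {k : ℤ} (x : E), |k| = 1 → p ((k : ℝ) • x) = p x := fun x hk => by
    rw [map_smul_eq_mul, Real.norm_eq_abs, ← Int.cast_abs, hk, Int.cast_one, one_mul]
  rcases Int.hexLattice_cases k₁ k₂ with ⟨rfl, rfl⟩ | ⟨hk₁, rfl⟩ | ⟨rfl, hk₂⟩ | ⟨rfl, hk₂⟩ | hspread
  · simp at hk
  · rwa [Int.cast_zero, zero_smul, add_zero, hunit _ hk₁]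
  · rwa [Int.cast_zero, zero_smul, zero_add, hunit _ hk₂]
  · rwa [show ((-k₂ : ℤ) : ℝ) • r • (v₁ + v₂) + (k₂ : ℝ) • r • (v₂ + (v₂ - v₁)) =
      (k₂ : ℝ) • r • (v₂ - v₁ + -v₁) by push_cast; module, hunit _ hk₂]
  · have hspread' :=
      p.max_sub_min_abs_le_of_hexagon h₁ h₂ h₃ ((k₁ - k₂ : ℤ) : ℝ) ((k₁ + 2 * k₂ : ℤ) : ℝ)
    rw [← Int.cast_add] at hspread'
    simp only [← Int.cast_abs, ← Int.cast_max, ← Int.cast_min, ← Int.cast_sub] at hspread'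
    calc (2 : ℝ) = ((2 : ℤ) : ℝ) := Int.cast_ofNat 2 |>.symm
      _ ≤ _ := Int.cast_le.2 hspread
      _ ≤ p (((k₁ - k₂ : ℤ) : ℝ) • v₁ + ((k₁ + 2 * k₂ : ℤ) : ℝ) • v₂) := hspread'
      _ ≤ r * p (((k₁ - k₂ : ℤ) : ℝ) • v₁ + ((k₁ + 2 * k₂ : ℤ) : ℝ) • v₂) :=
        le_mul_of_one_le_left (apply_nonneg _ _) hr
      _ = p (r • (((k₁ - k₂ : ℤ) : ℝ) • v₁ + ((k₁ + 2 * k₂ : ℤ) : ℝ) • v₂)) := by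
        rw [map_smul_eq_mul, Real.norm_of_nonneg (zero_le_one.trans hr)]
      _ = _ := by
        congr 1
        push_cast
        module

theorem exists_hexLattice_le (h₁ : p v₁ ≤ 1) (h₂ : p v₂ ≤ 1) (h₃ : p (v₂ - v₁) ≤ 1) (hr : 0 ≤ r)
    (α β : ℝ) : ∃ z₁ z₂ : ℤ, p (r • (α • v₁ + β • v₂) -
      ((z₁ : ℝ) • r • (v₁ + v₂) + (z₂ : ℝ) • r • (v₂ + (v₂ - v₁)))) ≤ r := by
  obtain ⟨z₁, z₂, hz⟩ := exists_int_hexagon_le_one α β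
  refine ⟨z₁, z₂, ?_⟩
  calc _ = p (r • ((α - z₁ + z₂) • v₁ + (β - z₁ - 2 * z₂) • v₂)) := by
        congr 1
        module
    _ = r * p ((α - z₁ + z₂) • v₁ + (β - z₁ - 2 * z₂) • v₂) := by
        rw [map_smul_eq_mul, Real.norm_of_nonneg hr]
    _ ≤ r * 1 := by gcongr; exact (p.le_max_abs_of_hexagon h₁ h₂ h₃ _ _).trans hz
    _ = r := mul_one r

end Seminorm

theorem LinearIndependent.hexLattice_generators {M : Type*} [AddCommGroup M] [Module ℝ M]
    {v₁ v₂ : M} (hli : LinearIndependent ℝ ![v₁, v₂]) {r : ℝ} (hr : r ≠ 0) :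
    LinearIndependent ℝ ![r • (v₁ + v₂), r • (v₂ + (v₂ - v₁))] := by
  rw [LinearIndependent.pair_iff] at hli ⊢
  intro s t hst
  obtain ⟨h₁, h₂⟩ := hli (r * (s - t)) (r * (s + 2 * t)) (by rw [← hst]; module)
  have h₁' := (mul_eq_zero.1 h₁).resolve_left hr
  have h₂' := (mul_eq_zero.1 h₂).resolve_left hr
  constructor <;> linarith

theorem LinearIndependent.exists_smul_add_smul_eq {v₁ v₂ : ℝ × ℝ}
    (hli : LinearIndependent ℝ ![v₁, v₂]) (x : ℝ × ℝ) : ∃ α β : ℝ, α • v₁ + β • v₂ = x := by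
  have hspan := hli.span_eq_top_of_card_eq_finrank' (by simp)
  rw [Matrix.range_cons_cons_empty] at hspan
  exact Submodule.mem_span_pair.1 (hspan ▸ Submodule.mem_top)

/-- Zong's lemma: for an affinely regular hexagon `v₁…v₆` inscribed in `C` (with
`v₃ = v₂ - v₁`, `v₄ = -v₁`, …), if `mᵢ` is the midpoint of `vᵢvᵢ₊₁` and `mᵢ* = tᵢ • mᵢ`
is the boundary point of `C` on the ray from the origin through `mᵢ`, then
`γ*(C) ≤ max {t₁, t₂, t₃}`. -/
theorem gammaStar_le_max (C : Set (ℝ × ℝ)) (hcpt : IsCompact C) (hconv : Convex ℝ C)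
    (hint : (interior C).Nonempty) (hsymm : C = -C)
    (v₁ v₂ : ℝ × ℝ) (hli : LinearIndependent ℝ ![v₁, v₂])
    (h1 : v₁ ∈ frontier C) (h2 : v₂ ∈ frontier C) (h3 : v₂ - v₁ ∈ frontier C)
    (t₁ t₂ t₃ : ℝ) (ht₁ : 1 ≤ t₁) (ht₂ : 1 ≤ t₂) (ht₃ : 1 ≤ t₃)
    (hm1 : t₁ • ((2⁻¹ : ℝ) • (v₁ + v₂)) ∈ frontier C)
    (hm2 : t₂ • ((2⁻¹ : ℝ) • (v₂ + (v₂ - v₁))) ∈ frontier C)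
    (hm3 : t₃ • ((2⁻¹ : ℝ) • ((v₂ - v₁) + -v₁)) ∈ frontier C) :
    gammaStar C ≤ max t₁ (max t₂ t₃) := by
  have hC : C ∈ 𝓝 0 := hconv.mem_nhds_zero_of_neg_eq hsymm.symm hint
  let p := gaugeSeminorm (hconv.balanced_of_neg_eq hsymm.symm) hconv (absorbent_nhds_zero hC)
  have hp : ∀ {x}, x ∈ frontier C → p x = 1 := (gauge_eq_one_iff_mem_frontier hconv hC).2
  set r := max t₁ (max t₂ t₃)
  have hr : 1 ≤ r := ht₁.trans (le_max_left _ _)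
  have hr₀ : 0 < r := one_pos.trans_le hr
  refine gammaStar_le_of_isLattice2 hr₀ ⟨_, _, hli.hexLattice_generators hr₀.ne', rfl⟩ ?_ ?_
  · refine isPacking_intSpanPair hconv hC hsymm.symm fun k₁ k₂ hk =>
      p.two_le_hexLattice (hp h1) (hp h2) (hp h3) hr ?_ ?_ ?_ hk
    · exact p.two_le_map_smul_of_eq_one (hp hm1) (by linarith) (le_max_left _ _)
    · exact p.two_le_map_smul_of_eq_one (hp hm2) (by linarith)
        (le_max_of_le_right (le_max_left _ _))
    · exact p.two_le_map_smul_of_eq_one (hp hm3) (by linarith)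
        (le_max_of_le_right (le_max_right _ _))
  · refine isCovering_smul_of_forall_exists_gauge_sub_le hconv hC hcpt.isClosed hr₀ fun x => ?_
    obtain ⟨α, β, hαβ⟩ := hli.exists_smul_add_smul_eq (r⁻¹ • x)
    obtain ⟨z₁, z₂, hz⟩ :=
      p.exists_hexLattice_le (hp h1).le (hp h2).le (hp h3).le hr₀.le α β
    refine ⟨_, ⟨z₁, z₂, rfl⟩, ?_⟩
    rwa [hαβ, smul_inv_smul₀ hr₀.ne'] at hz
end
end

section
/- For every two-dimensional centrally symmetric convex domain C, the ratio of the optimal lattice covering density to the optimal lattice packing density satisfies θ*(C)/δ*(C) ≤ 8(3−2√2). -/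
open Pointwise Set

noncomputable section

open MeasureTheory

/-- The lattice spanned by `v` and `w` over the integers. -/
def latticeOf (v w : ℝ × ℝ) : Set (ℝ × ℝ) :=
  {p | ∃ z₁ z₂ : ℤ, p = (z₁ : ℝ) • v + (z₂ : ℝ) • w}

/-- The determinant (covolume) of the lattice spanned by `v` and `w`. -/
def latDet (v w : ℝ × ℝ) : ℝ := |v.1 * w.2 - v.2 * w.1|

/-- δ*(C): the optimal lattice packing density of `C`. -/
def deltaStar (C : Set (ℝ × ℝ)) : ℝ :=
  sSup {d : ℝ | ∃ v w : ℝ × ℝ, LinearIndependent ℝ ![v, w] ∧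
    IsPacking C (latticeOf v w) ∧ d = (volume C).toReal / latDet v w}

/-- θ*(C): the optimal lattice covering density of `C`. -/
def thetaStar (C : Set (ℝ × ℝ)) : ℝ :=
  sInf {d : ℝ | ∃ v w : ℝ × ℝ, LinearIndependent ℝ ![v, w] ∧
    IsCovering C (latticeOf v w) ∧ d = (volume C).toReal / latDet v w}

open Topology

/-!
Let `N` be the norm whose unit ball is `C`. Normalising the unit circle and applying the
intermediate value theorem gives `p, q` with `N p = N q = N (p - q) = 1`, i.e. an affinely regular
hexagon `±p, ±q, ±(p - q)` inscribed in `∂C`. The triangle inequality shows `N (m p + n q) ≥ 1`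
for all integers `(m, n) ≠ 0`, so `C` packs along `2(ℤp + ℤq)`, of determinant `4 |det(p, q)|`.
The hexagon lies in `C` and tiles the plane along the lattice spanned by `p + q` and `2q - p`, of
determinant `3 |det(p, q)|`, so `C` covers along it. Hence `θ*(C) ≤ (4/3) δ*(C)`, and
`4/3 < 8(3 - 2√2)`.
-/

/-- In the coordinates `(s, t) ↦ s • (p + q) + t • (2q - p)` the three conditions cut out the
hexagon `±p, ±q, ±(p - q)`, so this says that it tiles the plane along that lattice. -/
theorem exists_int_sub_mem_hexagon (a b : ℝ) : ∃ d₁ d₂ : ℤ,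
    |a - d₁ - (b - d₂)| ≤ 1 ∧ |a - d₁ + 2 * (b - d₂)| ≤ 1 ∧ |2 * (a - d₁) + (b - d₂)| ≤ 1 := by
  suffices h : ∃ e₁ e₂ : ℤ, |Int.fract a - e₁ - (Int.fract b - e₂)| ≤ 1 ∧
      |Int.fract a - e₁ + 2 * (Int.fract b - e₂)| ≤ 1 ∧
      |2 * (Int.fract a - e₁) + (Int.fract b - e₂)| ≤ 1 by
    obtain ⟨e₁, e₂, h⟩ := h
    refine ⟨⌊a⌋ + e₁, ⌊b⌋ + e₂, ?_⟩
    simpa only [Int.fract, Int.cast_add, sub_add_eq_sub_sub] using h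
  have := Int.fract_nonneg a; have := Int.fract_lt_one a
  have := Int.fract_nonneg b; have := Int.fract_lt_one b
  set α := Int.fract a
  set β := Int.fract b
  simp only [abs_le]
  rcases le_total β α with hβα | hαβ
  · rcases le_total (2 * α + β) 1 with h | h
    · exact ⟨0, 0, by push_cast; constructorm* _ ∧ _ <;> linarith⟩
    rcases le_total (α + 2 * β) 2 with h' | h'
    · exact ⟨1, 0, by push_cast; constructorm* _ ∧ _ <;> linarith⟩
    · exact ⟨1, 1, by push_cast; constructorm* _ ∧ _ <;> linarith⟩
  · rcases le_total (α + 2 * β) 1 with h | h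
    · exact ⟨0, 0, by push_cast; constructorm* _ ∧ _ <;> linarith⟩
    rcases le_total (2 * α + β) 2 with h' | h'
    · exact ⟨0, 1, by push_cast; constructorm* _ ∧ _ <;> linarith⟩
    · exact ⟨1, 1, by push_cast; constructorm* _ ∧ _ <;> linarith⟩

theorem LinearIndependent.pair_of_eq_smul_add_smul {E : Type*} [AddCommGroup E] [Module ℝ E]
    {p q v w : E} (h : LinearIndependent ℝ ![p, q]) {a b c d : ℝ} (hv : v = a • p + b • q)
    (hw : w = c • p + d • q) (hdet : a * d - b * c ≠ 0) : LinearIndependent ℝ ![v, w] := by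
  rw [LinearIndependent.pair_iff] at h ⊢
  intro s t hst
  obtain ⟨h₁, h₂⟩ := h (s * a + t * c) (s * b + t * d) (by rw [← hst, hv, hw]; module)
  have hs : (a * d - b * c) * s = 0 := by linear_combination d * h₁ - c * h₂
  have ht : (a * d - b * c) * t = 0 := by linear_combination a * h₂ - b * h₁
  exact ⟨(mul_eq_zero.1 hs).resolve_left hdet, (mul_eq_zero.1 ht).resolve_left hdet⟩

namespace Seminorm

variable {E : Type*} [AddCommGroup E] [Module ℝ E]

theorem map_smul_add_smul_le_s19 (N : Seminorm ℝ E) {a b : ℝ} (ha : 0 ≤ a) (hb : 0 ≤ b) (x y : E) :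
    N (a • x + b • y) ≤ a * N x + b * N y := by
  simpa only [map_smul_eq_mul, Real.norm_eq_abs, abs_of_nonneg ha, abs_of_nonneg hb]
    using map_add_le_add N (a • x) (b • y)

variable {N : Seminorm ℝ E}

theorem one_le_map_smul_add_smul {u v : E} (hu : N u = 1) (huv : N (u - v) ≤ 1) {a b : ℝ}
    (ha : 1 ≤ a) (hb : 0 ≤ b) : 1 ≤ N (a • u + b • v) := by
  have hsplit : (a + b) • u = (a • u + b • v) + b • (u - v) := by module
  have := N.map_smul_add_smul_le_s19 zero_le_one hb (a • u + b • v) (u - v)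
  rw [one_smul, one_mul, ← hsplit, map_smul_eq_mul, Real.norm_eq_abs,
    abs_of_nonneg (by linarith), hu] at this
  nlinarith

/-- `±p, ±q, ±(p - q)` are the vertices of an affinely regular hexagon inscribed in the unit
sphere of `N`. -/
def InscribedHexagon (N : Seminorm ℝ E) (p q : E) : Prop :=
  N p = 1 ∧ N q = 1 ∧ N (p - q) = 1

namespace InscribedHexagon

variable {p q : E}

theorem one_le_map_intCast_smul_add (h : N.InscribedHexagon p q) {m n : ℤ}
    (hmn : m ≠ 0 ∨ n ≠ 0) : 1 ≤ N ((m : ℝ) • p + (n : ℝ) • q) := by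
  obtain ⟨hp, hq, hpq⟩ := h
  wlog hm : 0 ≤ m generalizing m n
  · have hneg := this (m := -m) (n := -n) (by omega) (by omega)
    rwa [show ((-m : ℤ) : ℝ) • p + ((-n : ℤ) : ℝ) • q = -((m : ℝ) • p + (n : ℝ) • q) by
      push_cast; module, map_neg_eq_map] at hneg
  -- write `m p + n q` as a nonnegative combination `a u + b v` of consecutive vertices, `a ≥ 1`
  rcases le_or_gt 0 n with hn | hn
  · rcases le_total n m with hnm | hmn'
    · exact one_le_map_smul_add_smul hp hpq.le (by exact_mod_cast (by omega : 1 ≤ m))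
        (by exact_mod_cast hn)
    · rw [add_comm]
      exact one_le_map_smul_add_smul hq (by rw [map_sub_rev, hpq])
        (by exact_mod_cast (by omega : 1 ≤ n)) (by exact_mod_cast hm)
  rcases le_or_gt 0 (m + n) with hmn' | hmn'
  · have := one_le_map_smul_add_smul (a := ((-n : ℤ) : ℝ)) (b := ((m + n : ℤ) : ℝ)) hpq
      (by rw [sub_sub_cancel_left, map_neg_eq_map, hq]) (by exact_mod_cast (by omega : 1 ≤ -n))
      (by exact_mod_cast hmn')
    convert this using 2
    push_cast; module
  · have := one_le_map_smul_add_smul (a := ((-(m + n) : ℤ) : ℝ)) (b := (m : ℝ)) (u := -q)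
      (v := p - q) (by rw [map_neg_eq_map, hq])
      (by rw [show -q - (p - q) = -p by abel, map_neg_eq_map, hp])
      (by exact_mod_cast (by omega : 1 ≤ -(m + n))) (by exact_mod_cast hm)
    convert this using 2
    push_cast; module

theorem map_smul_add_smul_le_one (h : N.InscribedHexagon p q) {a b : ℝ} (ha : |a| ≤ 1)
    (hb : |b| ≤ 1) (hab : |a + b| ≤ 1) : N (a • p + b • q) ≤ 1 := by
  obtain ⟨hp, hq, hpq⟩ := h
  wlog ha₀ : 0 ≤ a generalizing a b
  · have hneg := this (a := -a) (b := -b) (by rwa [abs_neg]) (by rwa [abs_neg])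
      (by rwa [← neg_add, abs_neg]) (by linarith)
    rwa [show (-a) • p + (-b) • q = -(a • p + b • q) by module, map_neg_eq_map] at hneg
  rw [abs_le] at ha hb hab
  rcases le_or_gt 0 b with hb₀ | hb₀
  · calc N (a • p + b • q) ≤ a * N p + b * N q := N.map_smul_add_smul_le_s19 ha₀ hb₀ p q
      _ ≤ 1 := by rw [hp, hq]; linarith
  rcases le_or_gt 0 (a + b) with hab₀ | hab₀
  · calc N (a • p + b • q) = N ((a + b) • p + (-b) • (p - q)) := by congr 1; module
      _ ≤ (a + b) * N p + (-b) * N (p - q) := N.map_smul_add_smul_le_s19 hab₀ (by linarith) _ _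
      _ ≤ 1 := by rw [hp, hpq]; linarith
  · calc N (a • p + b • q) = N (a • (p - q) + (-(a + b)) • (-q)) := by congr 1; module
      _ ≤ a * N (p - q) + (-(a + b)) * N (-q) := N.map_smul_add_smul_le_s19 ha₀ (by linarith) _ _
      _ ≤ 1 := by rw [hpq, map_neg_eq_map, hq]; linarith

theorem linearIndependent (h : N.InscribedHexagon p q) : LinearIndependent ℝ ![p, q] := by
  obtain ⟨hp, hq, hpq⟩ := h
  have hp₀ : p ≠ 0 := by rintro rfl; simp at hp
  refine (LinearIndependent.pair_iff' hp₀).2 fun a hap => ?_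
  have ha : |a| = 1 := by
    rwa [← hap, map_smul_eq_mul, Real.norm_eq_abs, hp, mul_one] at hq
  rcases abs_eq (zero_le_one' ℝ) |>.1 ha with rfl | rfl
  · rw [← hap, one_smul, sub_self, map_zero] at hpq
    exact zero_ne_one hpq
  · rw [← hap, neg_one_smul, sub_neg_eq_add, ← two_smul ℝ, map_smul_eq_mul, hp] at hpq
    norm_num at hpq

theorem exists_map_sub_le_one (h : N.InscribedHexagon p q) (X Y : ℝ) :
    ∃ z₁ z₂ : ℤ, N (X • p + Y • q - ((z₁ : ℝ) • (p + q) + (z₂ : ℝ) • ((2 : ℝ) • q - p))) ≤ 1 := by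
  obtain ⟨z₁, z₂, h₁, h₂, h₃⟩ := exists_int_sub_mem_hexagon ((2 * X + Y) / 3) ((Y - X) / 3)
  refine ⟨z₁, z₂, ?_⟩
  convert h.map_smul_add_smul_le_one h₁ h₂ (by convert h₃ using 2; ring) using 2
  module

end InscribedHexagon

end Seminorm

theorem Convex.zero_mem_interior_of_eq_neg {E : Type*} [AddCommGroup E] [Module ℝ E]
    [TopologicalSpace E] [IsTopologicalAddGroup E] [ContinuousConstSMul ℝ E] {C : Set E}
    (hconv : Convex ℝ C) (hint : (interior C).Nonempty) (hsymm : C = -C) :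
    (0 : E) ∈ interior C := by
  obtain ⟨y, hy⟩ := hint
  have hy' : -y ∈ interior C := by
    rw [hsymm]
    exact mem_interior.2 ⟨-interior C, neg_subset_neg.2 interior_subset, isOpen_interior.neg,
      neg_mem_neg.2 hy⟩
  simpa using hconv.interior.midpoint_mem hy hy'

theorem exists_seminorm_ball_subset_subset_closedBall {E : Type*} [NormedAddCommGroup E]
    [NormedSpace ℝ E] {C : Set E} (hcpt : IsCompact C) (hconv : Convex ℝ C)
    (hint : (interior C).Nonempty) (hsymm : C = -C) :
    ∃ N : Seminorm ℝ E, Continuous N ∧ (∀ x ≠ 0, 0 < N x) ∧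
      interior C ⊆ N.ball 0 1 ∧ N.closedBall 0 1 ⊆ C := by
  have h0 : C ∈ 𝓝 0 := mem_interior_iff_mem_nhds.1 (hconv.zero_mem_interior_of_eq_neg hint hsymm)
  have hbal : Balanced ℝ C := (balanced_iff_neg_mem hconv).2 fun x hx => by
    rw [hsymm]; simpa using hx
  have habs : Absorbent ℝ C := absorbent_nhds_zero h0
  refine ⟨gaugeSeminorm hbal hconv habs, continuous_gauge hconv h0,
    fun x hx => (gauge_pos habs (NormedSpace.isVonNBounded_of_isBounded ℝ hcpt.isBounded)).2 hx,
    fun x hx => ?_, fun x hx => ?_⟩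
  · rw [Seminorm.mem_ball_zero]
    exact (gauge_lt_one_iff_mem_interior hconv h0).2 hx
  · rw [Seminorm.mem_closedBall_zero] at hx
    simpa [hcpt.isClosed.closure_eq] using (gauge_le_one_iff_mem_closure hconv h0).1 hx

theorem exists_inscribedHexagon (N : Seminorm ℝ (ℝ × ℝ)) (hcont : Continuous N)
    (hpos : ∀ x ≠ 0, 0 < N x) : ∃ p q, N.InscribedHexagon p q := by
  let c : ℝ → ℝ × ℝ := fun τ => (Real.cos τ, Real.sin τ)
  have hc : ∀ τ, 0 < N (c τ) := fun τ => hpos _ fun h => by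
    obtain ⟨hcos, hsin⟩ := Prod.ext_iff.1 h
    simp only [c, Prod.fst_zero, Prod.snd_zero] at hcos hsin
    simpa [hcos, hsin] using Real.sin_sq_add_cos_sq τ
  let b : ℝ → ℝ × ℝ := fun τ => (N (c τ))⁻¹ • c τ
  have hb : ∀ τ, N (b τ) = 1 := fun τ => by
    rw [map_smul_eq_mul, Real.norm_eq_abs, abs_inv, abs_of_pos (hc τ), inv_mul_cancel₀ (hc τ).ne']
  have hbπ : b Real.pi = -b 0 := by
    have : c Real.pi = -c 0 := by simp [c]
    simp only [b, this, map_neg_eq_map, smul_neg]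
  have hcont_b : Continuous b :=
    ((hcont.comp (by fun_prop)).inv₀ fun τ => (hc τ).ne').smul (by fun_prop)
  have h1 : (1 : ℝ) ∈ Icc (N (b 0 - b 0)) (N (b 0 - b Real.pi)) := by
    rw [sub_self, map_zero, hbπ, sub_neg_eq_add, ← two_smul ℝ, map_smul_eq_mul, hb]
    norm_num
  obtain ⟨τ, -, hτ⟩ := intermediate_value_Icc Real.pi_pos.le
    (by fun_prop : Continuous fun τ => N (b 0 - b τ)).continuousOn h1
  exact ⟨b 0, b τ, hb 0, hb τ, hτ⟩

theorem interior_add_singleton_s19 {G : Type*} [TopologicalSpace G] [AddGroup G] [ContinuousAdd G]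
    (C : Set G) (x : G) :
    interior (C + {x}) = (· + x) '' interior C := by
  rw [add_singleton]
  exact ((Homeomorph.addRight x).image_interior C).symm

theorem isPacking_of_two_le_map_sub {C Λ : Set (ℝ × ℝ)} {N : Seminorm ℝ (ℝ × ℝ)}
    (hC : interior C ⊆ N.ball 0 1) (hΛ : Λ.Pairwise fun x y => 2 ≤ N (x - y)) :
    IsPacking C Λ := by
  intro x hx y hy hxy
  rw [Set.disjoint_left, interior_add_singleton_s19, interior_add_singleton_s19]
  rintro _ ⟨c, hc, rfl⟩ ⟨d, hd, hdy⟩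
  have hsub : x - y = d - c := by
    rw [sub_eq_sub_iff_add_eq_add, add_comm]
    exact hdy.symm
  have h2 : 2 ≤ N (d - c) := hsub ▸ hΛ hx hy hxy
  linarith [N.mem_ball_zero.1 (hC hc), N.mem_ball_zero.1 (hC hd), map_sub_le_add N d c]

theorem isCovering_of_forall_exists_sub_mem {C Λ : Set (ℝ × ℝ)} (h : ∀ x, ∃ y ∈ Λ, x - y ∈ C) :
    IsCovering C Λ := by
  refine eq_univ_of_forall fun x => ?_
  obtain ⟨y, hy, hxy⟩ := h x
  exact mem_iUnion₂.2 ⟨y, hy, x - y, hxy, y, rfl, sub_add_cancel x y⟩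

namespace Seminorm.InscribedHexagon

variable {N : Seminorm ℝ (ℝ × ℝ)} {p q : ℝ × ℝ} {C : Set (ℝ × ℝ)}

theorem isPacking_latticeOf (h : N.InscribedHexagon p q) (hC : interior C ⊆ N.ball 0 1) :
    IsPacking C (latticeOf ((2 : ℝ) • p) ((2 : ℝ) • q)) := by
  refine isPacking_of_two_le_map_sub hC ?_
  rintro _ ⟨m₁, m₂, rfl⟩ _ ⟨n₁, n₂, rfl⟩ hne
  have hmn : m₁ - n₁ ≠ 0 ∨ m₂ - n₂ ≠ 0 := by
    by_contra! h'
    rw [sub_eq_zero.1 h'.1, sub_eq_zero.1 h'.2] at hne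
    exact hne rfl
  calc (2 : ℝ) ≤ 2 * N (((m₁ - n₁ : ℤ) : ℝ) • p + ((m₂ - n₂ : ℤ) : ℝ) • q) := by
        linarith [h.one_le_map_intCast_smul_add hmn]
    _ = N ((2 : ℝ) • (((m₁ - n₁ : ℤ) : ℝ) • p + ((m₂ - n₂ : ℤ) : ℝ) • q)) := by
        rw [map_smul_eq_mul, Real.norm_two]
    _ = _ := by congr 1; push_cast; module

theorem isCovering_latticeOf (h : N.InscribedHexagon p q) (hC : N.closedBall 0 1 ⊆ C) :
    IsCovering C (latticeOf (p + q) ((2 : ℝ) • q - p)) := by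
  have hspan := h.linearIndependent.span_eq_top_of_card_eq_finrank (by simp)
  refine isCovering_of_forall_exists_sub_mem fun x => ?_
  have hx : x ∈ Submodule.span ℝ {p, q} := by
    rw [← Matrix.range_cons_cons_empty p q ![], hspan]
    trivial
  obtain ⟨X, Y, rfl⟩ := Submodule.mem_span_pair.1 hx
  obtain ⟨z₁, z₂, hz⟩ := h.exists_map_sub_le_one X Y
  exact ⟨_, ⟨z₁, z₂, rfl⟩, hC (N.mem_closedBall_zero.2 hz)⟩

end Seminorm.InscribedHexagon

theorem latDet_two_smul (p q : ℝ × ℝ) :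
    latDet ((2 : ℝ) • p) ((2 : ℝ) • q) = 4 / 3 * latDet (p + q) ((2 : ℝ) • q - p) := by
  rw [latDet, latDet, show (4 / 3 : ℝ) = |4 / 3| by norm_num, ← abs_mul]
  congr 1
  simp only [Prod.smul_fst, Prod.smul_snd, Prod.fst_add, Prod.snd_add, Prod.fst_sub,
    Prod.snd_sub, smul_eq_mul]
  ring

theorem thetaStar_div_deltaStar_le {C : Set (ℝ × ℝ)} {v w v' w' : ℝ × ℝ}
    (hli : LinearIndependent ℝ ![v, w]) (hcov : IsCovering C (latticeOf v w))
    (hli' : LinearIndependent ℝ ![v', w']) (hpack : IsPacking C (latticeOf v' w'))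
    {k : ℝ} (hk : 0 < k) (hdet : latDet v' w' = k * latDet v w) :
    thetaStar C / deltaStar C ≤ k := by
  set V := (volume C).toReal
  have hdens : ∀ v w, 0 ≤ V / latDet v w := fun v w => div_nonneg ENNReal.toReal_nonneg
    (abs_nonneg _)
  have hθ : thetaStar C ≤ V / latDet v w :=
    csInf_le ⟨0, by rintro _ ⟨v, w, -, -, rfl⟩; exact hdens v w⟩ ⟨v, w, hli, hcov, rfl⟩
  -- `deltaStar C = 0` is the junk value of an unbounded supremum
  rcases eq_or_ne (deltaStar C) 0 with hδ | hδ
  · rw [hδ, div_zero]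
    exact hk.le
  have hδ' : V / latDet v' w' ≤ deltaStar C :=
    le_csSup (by by_contra hb; exact hδ (Real.sSup_of_not_bddAbove hb)) ⟨v', w', hli', hpack, rfl⟩
  refine div_le_of_le_mul₀ ((hdens v' w').trans hδ') hk.le ?_
  calc thetaStar C ≤ V / latDet v w := hθ
    _ = k * (V / latDet v' w') := by rw [hdet, ← mul_div_assoc, mul_div_mul_left _ _ hk.ne']
    _ ≤ k * deltaStar C := by gcongr

/-- For every two-dimensional centrally symmetric convex domain,
`θ*(C)/δ*(C) ≤ 8(3 − 2√2)`. -/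
theorem covering_packing_density_ratio (C : Set (ℝ × ℝ)) (hcpt : IsCompact C)
    (hconv : Convex ℝ C) (hint : (interior C).Nonempty) (hsymm : C = -C) :
    thetaStar C / deltaStar C ≤ 8 * (3 - 2 * Real.sqrt 2) := by
  obtain ⟨N, hcont, hpos, hCint, hCcl⟩ :=
    exists_seminorm_ball_subset_subset_closedBall hcpt hconv hint hsymm
  obtain ⟨p, q, h⟩ := exists_inscribedHexagon N hcont hpos
  have hli_cov : LinearIndependent ℝ ![p + q, (2 : ℝ) • q - p] :=
    h.linearIndependent.pair_of_eq_smul_add_smul (a := 1) (b := 1) (c := -1) (d := 2)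
      (by module) (by module) (by norm_num)
  have hli_pack : LinearIndependent ℝ ![(2 : ℝ) • p, (2 : ℝ) • q] :=
    h.linearIndependent.pair_of_eq_smul_add_smul (a := 2) (b := 0) (c := 0) (d := 2)
      (by module) (by module) (by norm_num)
  calc thetaStar C / deltaStar C ≤ 4 / 3 :=
        thetaStar_div_deltaStar_le hli_cov (h.isCovering_latticeOf hCcl) hli_pack
          (h.isPacking_latticeOf hCint) (by norm_num) (latDet_two_smul p q)
    _ ≤ 8 * (3 - 2 * Real.sqrt 2) := by
        nlinarith [Real.sq_sqrt (show (0 : ℝ) ≤ 2 by norm_num), Real.sqrt_nonneg 2]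
end
end
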